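/- arXiv:2307.14927 — 3 statements merged into one kernel-verified Lean document; each statement's English description precedes it below -/
import Mathlib

section
/- Let K, s, r be positive integers with s | K, s | (r-1), and (r-1)/s + 1 ≤ K/s; set Λ = K/s and t = (r-1)/s. With the storage assignment D_{(i,C,T)} = G_i[C] ∪ (⋃_{j≠i} G_j[T]) over all valid tuples (i,C,T), each node k ∈ [K] stores exactly C(Λ-1, t)·(st+1) input files, i.e., |{(i,C,T) : k ∈ D_{(i,C,T)}}| = C(Λ-1, t)·(st+1). -/
/-- The index set of input files: tuples (i, C, T). -/
def tuples (Λ s t : ℕ) : Finset (ℕ × Finset ℕ × Finset ℕ) :=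
  (Finset.Icc 1 s).biUnion fun i =>
    ((Finset.Icc 1 Λ).powersetCard (t + 1)).biUnion fun C =>
      (C.powersetCard t).image fun T => (i, C, T)

/-- G_i[S] = {(i-1)Λ + x : x ∈ S}. -/
def Gset (Λ i : ℕ) (S : Finset ℕ) : Finset ℕ := S.image fun x => (i - 1) * Λ + x

/-- The storage set D_{(i,C,T)} = G_i[C] ∪ (⋃_{j ∈ [s]\{i}} G_j[T]). -/
def Dset (Λ s i : ℕ) (C T : Finset ℕ) : Finset ℕ :=
  Gset Λ i C ∪ ((Finset.Icc 1 s).erase i).biUnion fun j => Gset Λ j T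

/-!
Write node `k` as the `x`-th node of group `j`, i.e. `j = (k - 1) / Λ + 1` and
`x = (k - 1) % Λ + 1`. A tuple `(i, C, T)` stores `k` iff `x ∈ C` when `i = j`, and iff `x ∈ T`
when `i ≠ j`. Among the `C(Λ - 1, t)` sets `C ∋ x`, every one of the `t + 1` choices of `T` works
in the first case and exactly the `t` sets `T ∋ x` work in the second, which gives
`C(Λ - 1, t) · ((t + 1) + (s - 1) t)`.
-/

open Finset

lemma card_filter_mem_powersetCard {α : Type*} [DecidableEq α] {a : α} {A : Finset α}
    (ha : a ∈ A) (n : ℕ) :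
    #{S ∈ A.powersetCard (n + 1) | a ∈ S} = (#A - 1).choose n := by
  simpa using card_filter_powersetCard_subset {a} A (n + 1) (singleton_subset_iff.2 ha) (by simp)

lemma card_filter_mem_powersetCard_of_card_eq_succ {α : Type*} [DecidableEq α] {a : α}
    {C : Finset α} {t : ℕ} (hC : #C = t + 1) :
    #{T ∈ C.powersetCard t | a ∈ T} = if a ∈ C then t else 0 := by
  split_ifs with ha
  · cases t with
    | zero => simp
    | succ m =>
      rw [card_filter_mem_powersetCard ha, hC, Nat.add_sub_cancel, Nat.choose_succ_self_right]
  · rw [card_eq_zero, filter_eq_empty_iff]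
    exact fun T hT haT => ha ((mem_powersetCard.1 hT).1 haT)

lemma sum_powersetCard_ite_mem {α : Type*} [DecidableEq α] {a : α} {A : Finset α}
    (ha : a ∈ A) (n m : ℕ) :
    ∑ C ∈ A.powersetCard (n + 1), (if a ∈ C then m else 0) = (#A - 1).choose n * m := by
  rw [← sum_filter, sum_const, card_filter_mem_powersetCard ha, smul_eq_mul]

lemma sum_ite_eq_succ {ι : Type*} [DecidableEq ι] {S : Finset ι} {a : ι} (ha : a ∈ S) (m : ℕ) :
    ∑ i ∈ S, (if a = i then m + 1 else m) = #S * m + 1 := by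
  have h : ∀ i, (if a = i then m + 1 else m) = m + if a = i then 1 else 0 := fun i => by
    split_ifs <;> rfl
  simp only [h, sum_add_distrib, sum_const, smul_eq_mul, sum_ite_eq, if_pos ha]

lemma div_add_one_mem_Icc {Λ s k : ℕ} (hk : k ∈ Icc 1 (Λ * s)) : (k - 1) / Λ + 1 ∈ Icc 1 s := by
  rw [mem_Icc] at hk ⊢
  exact ⟨le_add_self, Nat.div_lt_of_lt_mul (by omega)⟩

lemma mod_add_one_mem_Icc {Λ k : ℕ} (hΛ : 0 < Λ) : (k - 1) % Λ + 1 ∈ Icc 1 Λ :=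
  mem_Icc.2 ⟨le_add_self, Nat.mod_lt _ hΛ⟩

lemma mem_Gset_iff {Λ i k : ℕ} {S : Finset ℕ} (hi : 1 ≤ i) (hk : 1 ≤ k) (hS : S ⊆ Icc 1 Λ) :
    k ∈ Gset Λ i S ↔ (k - 1) / Λ + 1 = i ∧ (k - 1) % Λ + 1 ∈ S := by
  rcases Nat.eq_zero_or_pos Λ with rfl | hΛ
  · simp [Gset, subset_empty.1 hS]
  rw [Gset, mem_image]
  constructor
  · rintro ⟨y, hy, rfl⟩
    have hy' := mem_Icc.1 (hS hy)
    obtain ⟨hq, hr⟩ := (Nat.div_mod_unique hΛ).2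
      ⟨show y - 1 + Λ * (i - 1) = (i - 1) * Λ + y - 1 by rw [mul_comm]; omega, by omega⟩
    exact ⟨by omega, by rwa [hr, Nat.sub_add_cancel hy'.1]⟩
  · rintro ⟨hq, hr⟩
    refine ⟨_, hr, ?_⟩
    have := Nat.div_add_mod (k - 1) Λ
    rw [← hq, Nat.add_sub_cancel, mul_comm]
    omega

lemma mem_Dset_iff {Λ s i k : ℕ} {C T : Finset ℕ} (hi : i ∈ Icc 1 s) (hk : k ∈ Icc 1 (Λ * s))
    (hC : C ⊆ Icc 1 Λ) (hTC : T ⊆ C) :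
    k ∈ Dset Λ s i C T ↔
      if (k - 1) / Λ + 1 = i then (k - 1) % Λ + 1 ∈ C else (k - 1) % Λ + 1 ∈ T := by
  have hj := div_add_one_mem_Icc hk
  have hk1 := (mem_Icc.1 hk).1
  rw [Dset, mem_union, mem_biUnion, mem_Gset_iff (mem_Icc.1 hi).1 hk1 hC]
  have hT : (∃ j ∈ (Icc 1 s).erase i, k ∈ Gset Λ j T) ↔
      (k - 1) / Λ + 1 ≠ i ∧ (k - 1) % Λ + 1 ∈ T := by
    constructor
    · rintro ⟨j, hj', hkj⟩
      obtain ⟨hji, hj'⟩ := mem_erase.1 hj'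
      obtain ⟨rfl, hx⟩ := (mem_Gset_iff (mem_Icc.1 hj').1 hk1 (hTC.trans hC)).1 hkj
      exact ⟨hji, hx⟩
    · rintro ⟨hji, hx⟩
      exact ⟨_, mem_erase.2 ⟨hji, hj⟩, (mem_Gset_iff le_add_self hk1 (hTC.trans hC)).2 ⟨rfl, hx⟩⟩
  rw [hT]
  split_ifs with h <;> simp [h]

lemma card_filter_tuples (Λ s t : ℕ) (P : ℕ → Finset ℕ → Finset ℕ → Prop)
    [∀ i C T, Decidable (P i C T)] :
    #{p ∈ tuples Λ s t | P p.1 p.2.1 p.2.2} =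
      ∑ i ∈ Icc 1 s, ∑ C ∈ (Icc 1 Λ).powersetCard (t + 1), #{T ∈ C.powersetCard t | P i C T} := by
  rw [tuples, filter_biUnion, card_biUnion]
  · refine sum_congr rfl fun i _ => ?_
    rw [filter_biUnion, card_biUnion]
    · refine sum_congr rfl fun C _ => ?_
      rw [filter_image, card_image_of_injective _ fun T T' h => by simpa using h]
    · intro C _ C' _ hC
      simp only [Function.onFun, disjoint_left, mem_filter, mem_image]
      aesop
  · intro i _ i' _ hi
    simp only [Function.onFun, disjoint_left, mem_filter, mem_biUnion, mem_image]
    aesop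

lemma sum_card_filter_mem_Dset {Λ s t i k : ℕ} (hi : i ∈ Icc 1 s) (hk : k ∈ Icc 1 (Λ * s)) :
    ∑ C ∈ (Icc 1 Λ).powersetCard (t + 1), #{T ∈ C.powersetCard t | k ∈ Dset Λ s i C T} =
      (Λ - 1).choose t * if (k - 1) / Λ + 1 = i then t + 1 else t := by
  have hΛ : 0 < Λ := Nat.pos_of_ne_zero fun h => by simp [h] at hk
  calc _ = ∑ C ∈ (Icc 1 Λ).powersetCard (t + 1), if (k - 1) % Λ + 1 ∈ C then
          (if (k - 1) / Λ + 1 = i then t + 1 else t) else 0 := by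
        refine sum_congr rfl fun C hC => ?_
        obtain ⟨hCsub, hCcard⟩ := mem_powersetCard.1 hC
        rw [filter_congr fun T hT => mem_Dset_iff hi hk hCsub (mem_powersetCard.1 hT).1]
        split_ifs with hg hx hx
        · rw [filter_true_of_mem fun _ _ => hx, card_powersetCard, hCcard,
            Nat.choose_succ_self_right]
        · exact card_eq_zero.2 (filter_false_of_mem fun _ _ => hx)
        · rw [card_filter_mem_powersetCard_of_card_eq_succ hCcard, if_pos hx]
        · rw [card_filter_mem_powersetCard_of_card_eq_succ hCcard, if_neg hx]
    _ = _ := by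
        rw [sum_powersetCard_ite_mem (mod_add_one_mem_Icc hΛ), Nat.card_Icc, Nat.add_sub_cancel]

theorem stmt_2_general (K s : ℕ) (hdvdK : s ∣ K) (Λ t : ℕ) (hΛ : Λ = K / s)
    (k : ℕ) (hk : k ∈ Finset.Icc 1 K) :
    ((tuples Λ s t).filter fun p => k ∈ Dset Λ s p.1 p.2.1 p.2.2).card
      = (Λ - 1).choose t * (s * t + 1) := by
  rw [← Nat.div_mul_cancel hdvdK, ← hΛ] at hk
  refine (card_filter_tuples Λ s t fun i C T => k ∈ Dset Λ s i C T).trans ?_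
  rw [sum_congr rfl fun i hi => sum_card_filter_mem_Dset hi hk, ← mul_sum,
    sum_ite_eq_succ (div_add_one_mem_Icc hk), Nat.card_Icc, Nat.add_sub_cancel]

theorem stmt_2 (K s r : ℕ) (hK : 0 < K) (hs : 0 < s) (hr : 0 < r)
    (hdvdK : s ∣ K) (hdvdr : s ∣ (r - 1))
    (Λ t : ℕ) (hΛ : Λ = K / s) (ht : t = (r - 1) / s) (htΛ : t + 1 ≤ Λ)
    (k : ℕ) (hk : k ∈ Finset.Icc 1 K) :
    ((tuples Λ s t).filter fun p => k ∈ Dset Λ s p.1 p.2.1 p.2.2).card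
      = (Λ - 1).choose t * (s * t + 1) :=
  stmt_2_general K s hdvdK Λ t hΛ k hk
end

section
/- With K, s, r, Λ = K/s, t = (r-1)/s as above, the total storage across all nodes equals r times the number of input files: Σ_{k∈[K]} |{(i,C,T) : k ∈ D_{(i,C,T)}}| = r · s·(t+1)·C(Λ, t+1), i.e., the computation load of the scheme equals r. -/
/-!
Double counting: the sum over nodes of the number of files a node stores is the sum over files
of the number of nodes storing it. The storage set of `(i, C, T)` is a disjoint union of
translates of `C` (in block `i`) and of `T` (in each of the other `s - 1` blocks), so it has
`(t + 1) + (s - 1) t = s t + 1 = r` elements, and there are `s (t + 1) C(Λ, t + 1)` files.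
-/

open Finset

lemma Finset.sum_card_filter_mem_eq_sum_card {α β : Type*} [DecidableEq α] {A : Finset α}
    {B : Finset β} {D : β → Finset α} (hD : ∀ p ∈ B, D p ⊆ A) :
    ∑ k ∈ A, #{p ∈ B | k ∈ D p} = ∑ p ∈ B, #(D p) := by
  refine (sum_card_bipartiteAbove_eq_sum_card_bipartiteBelow (r := fun k p => k ∈ D p)).trans <|
    sum_congr rfl fun p hp => ?_
  rw [bipartiteBelow, filter_mem_eq_inter, inter_eq_right.mpr (hD p hp)]

lemma Finset.card_biUnion_of_label {ι β : Type*} [DecidableEq β] {s : Finset ι}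
    {f : ι → Finset β} (g : β → ι) (hg : ∀ i ∈ s, ∀ b ∈ f i, g b = i) :
    #(s.biUnion f) = ∑ i ∈ s, #(f i) :=
  card_biUnion fun i _ j _ hij => disjoint_left.mpr fun b hbi hbj => hij <|
    (hg i ‹_› b hbi).symm.trans (hg j ‹_› b hbj)

lemma mem_tuples {Λ s t : ℕ} {p : ℕ × Finset ℕ × Finset ℕ} :
    p ∈ tuples Λ s t ↔ p.1 ∈ Icc 1 s ∧ p.2.1 ∈ (Icc 1 Λ).powersetCard (t + 1) ∧
      p.2.2 ∈ p.2.1.powersetCard t := by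
  obtain ⟨i, C, T⟩ := p
  simp [tuples]

lemma card_tuples (Λ s t : ℕ) : #(tuples Λ s t) = s * (t + 1) * Λ.choose (t + 1) := by
  have hT : ∀ (i : ℕ) (C : Finset ℕ), #((C.powersetCard t).image fun T => (i, C, T)) =
      (#C).choose t :=
    fun i C => by rw [card_image_of_injective _ fun T T' h => by simpa using h, card_powersetCard]
  have hC : ∀ i : ℕ, #(((Icc 1 Λ).powersetCard (t + 1)).biUnion fun C =>
      (C.powersetCard t).image fun T => (i, C, T)) = (t + 1) * Λ.choose (t + 1) := fun i => by
    rw [card_biUnion_of_label (fun p : ℕ × Finset ℕ × Finset ℕ => p.2.1) (by simp +contextual),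
      sum_congr rfl fun C hC => by rw [hT, (mem_powersetCard.mp hC).2, Nat.choose_succ_self_right],
      sum_const, card_powersetCard, Nat.card_Icc, smul_eq_mul, Nat.add_sub_cancel, mul_comm]
  rw [tuples, card_biUnion_of_label Prod.fst (by simp +contextual), sum_congr rfl fun i _ => hC i,
    sum_const, Nat.card_Icc, smul_eq_mul, Nat.add_sub_cancel, mul_assoc]

lemma card_Gset (Λ i : ℕ) (S : Finset ℕ) : #(Gset Λ i S) = #S :=
  card_image_of_injective _ (add_right_injective _)

lemma eq_of_mul_add_eq_mul_add {Λ a b x y : ℕ} (hx : x ∈ Icc 1 Λ) (hy : y ∈ Icc 1 Λ)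
    (h : a * Λ + x = b * Λ + y) : a = b := by
  rw [mem_Icc] at hx hy
  rcases lt_trichotomy a b with hab | rfl | hab
  · nlinarith [Nat.mul_le_mul_right Λ (Nat.succ_le_of_lt hab)]
  · rfl
  · nlinarith [Nat.mul_le_mul_right Λ (Nat.succ_le_of_lt hab)]

lemma disjoint_Gset {Λ i j : ℕ} (hi : 1 ≤ i) (hj : 1 ≤ j) (hij : i ≠ j) {S S' : Finset ℕ}
    (hS : S ⊆ Icc 1 Λ) (hS' : S' ⊆ Icc 1 Λ) : Disjoint (Gset Λ i S) (Gset Λ j S') := by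
  simp only [Gset, disjoint_left, mem_image]
  rintro _ ⟨x, hx, rfl⟩ ⟨y, hy, h⟩
  have := eq_of_mul_add_eq_mul_add (hS hx) (hS' hy) h.symm
  omega

lemma Gset_subset_Icc {Λ s i : ℕ} (hi : i ∈ Icc 1 s) {S : Finset ℕ} (hS : S ⊆ Icc 1 Λ) :
    Gset Λ i S ⊆ Icc 1 (s * Λ) := by
  obtain ⟨hi1, his⟩ := mem_Icc.mp hi
  obtain ⟨i, rfl⟩ := Nat.exists_eq_add_of_le' hi1
  simp only [Gset, subset_iff, mem_image, mem_Icc]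
  rintro _ ⟨x, hx, rfl⟩
  obtain ⟨hx1, hxΛ⟩ := mem_Icc.mp (hS hx)
  rw [Nat.add_sub_cancel]
  constructor
  · omega
  · nlinarith

lemma Dset_subset_Icc {Λ s i : ℕ} (hi : i ∈ Icc 1 s) {C T : Finset ℕ} (hC : C ⊆ Icc 1 Λ)
    (hT : T ⊆ C) : Dset Λ s i C T ⊆ Icc 1 (s * Λ) :=
  union_subset (Gset_subset_Icc hi hC) <| biUnion_subset.mpr fun _ hj =>
    Gset_subset_Icc (mem_of_mem_erase hj) (hT.trans hC)

lemma card_Dset {Λ s i : ℕ} (hi : i ∈ Icc 1 s) {C T : Finset ℕ} (hC : C ⊆ Icc 1 Λ)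
    (hT : T ⊆ C) : #(Dset Λ s i C T) = #C + (s - 1) * #T := by
  have hi1 : 1 ≤ i := (mem_Icc.mp hi).1
  have hj1 : ∀ j ∈ (Icc 1 s).erase i, 1 ≤ j := fun j hj => (mem_Icc.mp (mem_of_mem_erase hj)).1
  have hTΛ : T ⊆ Icc 1 Λ := hT.trans hC
  rw [Dset, card_union_of_disjoint, card_biUnion]
  · simp only [card_Gset, sum_const, card_erase_of_mem hi, Nat.card_Icc, smul_eq_mul,
      Nat.add_sub_cancel]
  · exact fun j hj j' hj' hjj' => disjoint_Gset (hj1 j hj) (hj1 j' hj') hjj' hTΛ hTΛ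
  · exact disjoint_biUnion_right _ _ _ |>.mpr fun j hj =>
      disjoint_Gset hi1 (hj1 j hj) (ne_of_mem_erase hj).symm hC hTΛ

lemma Dset_subset_Icc_of_mem_tuples {Λ s t : ℕ} {p : ℕ × Finset ℕ × Finset ℕ}
    (hp : p ∈ tuples Λ s t) : Dset Λ s p.1 p.2.1 p.2.2 ⊆ Icc 1 (s * Λ) := by
  obtain ⟨hi, hC, hT⟩ := mem_tuples.mp hp
  exact Dset_subset_Icc hi (mem_powersetCard.mp hC).1 (mem_powersetCard.mp hT).1

lemma card_Dset_of_mem_tuples {Λ s t : ℕ} {p : ℕ × Finset ℕ × Finset ℕ}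
    (hp : p ∈ tuples Λ s t) : #(Dset Λ s p.1 p.2.1 p.2.2) = s * t + 1 := by
  obtain ⟨hi, hC, hT⟩ := mem_tuples.mp hp
  rw [mem_powersetCard] at hC hT
  obtain ⟨s, rfl⟩ := Nat.exists_eq_add_of_le' ((mem_Icc.mp hi).1.trans (mem_Icc.mp hi).2)
  rw [card_Dset hi hC.1 hT.1, hC.2, hT.2, Nat.add_sub_cancel]
  ring

theorem stmt_3_general (K s r : ℕ) (hr : 0 < r)
    (hdvdK : s ∣ K) (hdvdr : s ∣ (r - 1))
    (Λ t : ℕ) (hΛ : Λ = K / s) (ht : t = (r - 1) / s) :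
    ∑ k ∈ Finset.Icc 1 K,
        ((tuples Λ s t).filter fun p => k ∈ Dset Λ s p.1 p.2.1 p.2.2).card
      = r * (s * (t + 1) * Λ.choose (t + 1)) := by
  have hK : K = s * Λ := by rw [hΛ, Nat.mul_div_cancel' hdvdK]
  have hrst : r = s * t + 1 := by
    have : s * t = r - 1 := by rw [ht, Nat.mul_div_cancel' hdvdr]
    omega
  subst hK
  rw [sum_card_filter_mem_eq_sum_card fun _ => Dset_subset_Icc_of_mem_tuples,
    sum_congr rfl fun _ => card_Dset_of_mem_tuples, sum_const, card_tuples, smul_eq_mul, hrst,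
    mul_comm]

theorem stmt_3 (K s r : ℕ) (hK : 0 < K) (hs : 0 < s) (hr : 0 < r)
    (hdvdK : s ∣ K) (hdvdr : s ∣ (r - 1))
    (Λ t : ℕ) (hΛ : Λ = K / s) (ht : t = (r - 1) / s) (htΛ : t + 1 ≤ Λ) :
    ∑ k ∈ Finset.Icc 1 K,
        ((tuples Λ s t).filter fun p => k ∈ Dset Λ s p.1 p.2.1 p.2.2).card
      = r * (s * (t + 1) * Λ.choose (t + 1)) :=
  stmt_3_general K s r hr hdvdK hdvdr Λ t hΛ ht
end

section
/- With the same setup, for any tuple (i,C,T) and any q ∈ [Λ]: |A_q ∩ D_{(i,C,T)}| = 1 if and only if q is the unique element of C \ T. -/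
/-- A_q = {(i-1)Λ + q : i ∈ [s]}. -/
def Aset (Λ s q : ℕ) : Finset ℕ := (Finset.Icc 1 s).image fun i => (i - 1) * Λ + q

open Finset

lemma eq_and_eq_of_mul_add_eq_mul_add {Λ a b x y : ℕ} (hx : x ∈ Icc 1 Λ) (hy : y ∈ Icc 1 Λ)
    (h : a * Λ + x = b * Λ + y) : a = b ∧ x = y := by
  rw [mem_Icc] at hx hy
  have hab : a = b := by
    by_contra hne
    rcases Nat.lt_or_gt_of_ne hne with hlt | hlt <;>
      nlinarith [Nat.mul_le_mul_right Λ (Nat.succ_le_of_lt hlt)]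
  subst hab
  exact ⟨rfl, by omega⟩

lemma mul_add_mem_Gset_iff {Λ j k q : ℕ} {S : Finset ℕ} (hS : S ⊆ Icc 1 Λ) (hq : q ∈ Icc 1 Λ)
    (hj : 1 ≤ j) (hk : 1 ≤ k) : (k - 1) * Λ + q ∈ Gset Λ j S ↔ k = j ∧ q ∈ S := by
  simp only [Gset, mem_image]
  constructor
  · rintro ⟨x, hxS, hx⟩
    obtain ⟨hjk, rfl⟩ := eq_and_eq_of_mul_add_eq_mul_add (hS hxS) hq hx
    exact ⟨by omega, hxS⟩
  · rintro ⟨rfl, hqS⟩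
    exact ⟨q, hqS, rfl⟩

lemma mul_add_mem_Dset_iff {Λ s i k q : ℕ} {C T : Finset ℕ} (hC : C ⊆ Icc 1 Λ)
    (hT : T ⊆ Icc 1 Λ) (hq : q ∈ Icc 1 Λ) (hi : 1 ≤ i) (hk : k ∈ Icc 1 s) :
    (k - 1) * Λ + q ∈ Dset Λ s i C T ↔ (k = i ∧ q ∈ C) ∨ (k ≠ i ∧ q ∈ T) := by
  have hk1 : 1 ≤ k := (mem_Icc.mp hk).1
  simp only [Dset, mem_union, mem_biUnion, mem_erase, mul_add_mem_Gset_iff hC hq hi hk1]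
  constructor
  · rintro (h | ⟨j, ⟨hji, hj⟩, hkj⟩)
    · exact Or.inl h
    · rw [mul_add_mem_Gset_iff hT hq (mem_Icc.mp hj).1 hk1] at hkj
      exact Or.inr ⟨hkj.1 ▸ hji, hkj.2⟩
  · rintro (h | ⟨hki, hqT⟩)
    · exact Or.inl h
    · exact Or.inr ⟨k, ⟨hki, hk⟩, (mul_add_mem_Gset_iff hT hq hk1 hk1).mpr ⟨rfl, hqT⟩⟩

lemma Aset_inter_Dset_eq_image {Λ s i q : ℕ} {C T : Finset ℕ} (hC : C ⊆ Icc 1 Λ)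
    (hT : T ⊆ Icc 1 Λ) (hq : q ∈ Icc 1 Λ) (hi : 1 ≤ i) :
    Aset Λ s q ∩ Dset Λ s i C T =
      ({k ∈ Icc 1 s | (k = i ∧ q ∈ C) ∨ (k ≠ i ∧ q ∈ T)}).image fun k => (k - 1) * Λ + q := by
  rw [← filter_mem_eq_inter, Aset, filter_image]
  congr 1
  exact filter_congr fun k hk => mul_add_mem_Dset_iff hC hT hq hi hk

lemma card_Aset_inter_Dset {Λ s i q : ℕ} {C T : Finset ℕ} (hC : C ⊆ Icc 1 Λ)
    (hT : T ⊆ Icc 1 Λ) (hq : q ∈ Icc 1 Λ) (hi : 1 ≤ i) :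
    #(Aset Λ s q ∩ Dset Λ s i C T) = #{k ∈ Icc 1 s | (k = i ∧ q ∈ C) ∨ (k ≠ i ∧ q ∈ T)} := by
  rw [Aset_inter_Dset_eq_image hC hT hq hi, card_image_of_injOn]
  intro a ha b hb hab
  have ha1 := (mem_Icc.mp (mem_filter.mp ha).1).1
  have hb1 := (mem_Icc.mp (mem_filter.mp hb).1).1
  have := (eq_and_eq_of_mul_add_eq_mul_add hq hq hab).1
  omega

lemma card_filter_eq_one_iff_mem_sdiff {s i q : ℕ} {C T : Finset ℕ} (hs : 2 ≤ s)
    (hi : i ∈ Icc 1 s) (hTC : T ⊆ C) :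
    #{k ∈ Icc 1 s | (k = i ∧ q ∈ C) ∨ (k ≠ i ∧ q ∈ T)} = 1 ↔ q ∈ C \ T := by
  rw [mem_sdiff]
  by_cases hqT : q ∈ T
  · have hqC := hTC hqT
    simp only [hqT, hqC, and_true, not_true_eq_false, and_false, iff_false]
    rw [filter_true_of_mem fun k _ => em _, Nat.card_Icc]
    omega
  · by_cases hqC : q ∈ C
    · simp only [hqT, hqC, and_true, and_false, or_false, not_false_eq_true, and_self, iff_true]
      rw [filter_eq', if_pos hi, card_singleton]
    · simp [hqT, hqC]

theorem stmt_6_general (s : ℕ) (hs : 2 ≤ s)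
    (Λ t : ℕ)
    (i : ℕ) (C T : Finset ℕ)
    (hi : i ∈ Finset.Icc 1 s)
    (hC : C ∈ (Finset.Icc 1 Λ).powersetCard (t + 1))
    (hT : T ∈ C.powersetCard t)
    (q : ℕ) (hq : q ∈ Finset.Icc 1 Λ) :
    (Aset Λ s q ∩ Dset Λ s i C T).card = 1 ↔ C \ T = {q} := by
  obtain ⟨hCΛ, hCcard⟩ := mem_powersetCard.mp hC
  obtain ⟨hTC, hTcard⟩ := mem_powersetCard.mp hT
  have hsdiff : #(C \ T) = 1 := by rw [card_sdiff_of_subset hTC]; omega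
  rw [card_Aset_inter_Dset hCΛ (hTC.trans hCΛ) hq (mem_Icc.mp hi).1,
    card_filter_eq_one_iff_mem_sdiff hs hi hTC]
  obtain ⟨a, ha⟩ := card_eq_one.mp hsdiff
  rw [ha, mem_singleton, singleton_inj, eq_comm]

theorem stmt_6 (K s r : ℕ) (hK : 0 < K) (hs : 2 ≤ s) (hr : 0 < r)
    (hdvdK : s ∣ K) (hdvdr : s ∣ (r - 1))
    (Λ t : ℕ) (hΛ : Λ = K / s) (ht : t = (r - 1) / s)
    (i : ℕ) (C T : Finset ℕ)
    (hi : i ∈ Finset.Icc 1 s)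
    (hC : C ∈ (Finset.Icc 1 Λ).powersetCard (t + 1))
    (hT : T ∈ C.powersetCard t)
    (q : ℕ) (hq : q ∈ Finset.Icc 1 Λ) :
    (Aset Λ s q ∩ Dset Λ s i C T).card = 1 ↔ C \ T = {q} :=
  stmt_6_general s hs Λ t i C T hi hC hT q hq
end
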